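/- arXiv:1912.08835 — 3 statements merged into one kernel-verified Lean document; each statement's English description precedes it below -/
import Mathlib

section
/- Let G be a finite group. If V(K,G) is a CI-S-ring for every K ∈ Sup_2^min(G_r), then G is a DCI-group. -/
open Pointwise

/-! ### Cayley digraphs and CI-subsets (groups written additively) -/

/-- The arc set `R(S) = {(g, s+g) : g ∈ G, s ∈ S}` of the Cayley digraph `Cay(G,S)`. -/
def arcs {G : Type*} [AddGroup G] (S : Set G) : Set (G × G) :=
  {a | ∃ s ∈ S, a.2 = s + a.1}

/-- The image `R^f` of a set of arcs under a permutation `f`. -/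
def pmap {G : Type*} (f : Equiv.Perm G) (R : Set (G × G)) : Set (G × G) :=
  (fun a => (f a.1, f a.2)) '' R

/-- `S ⊆ G` is a CI-subset: every Cayley digraph isomorphic to `Cay(G,S)` is Cayley
isomorphic to it. -/
def IsCISubset {G : Type*} [AddGroup G] (S : Set G) : Prop :=
  ∀ T : Set G, (∃ f : Equiv.Perm G, pmap f (arcs S) = arcs T) →
    ∃ φ : G ≃+ G, ⇑φ '' S = T

/-- `G` is a DCI-group: every subset of `G` is a CI-subset. -/
def IsDCI (G : Type*) [AddGroup G] : Prop := ∀ S : Set G, IsCISubset S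

/-! ### S-rings, given by their partitions into basic sets.

The condition that the ℤ-span of the blocks is a subring of the group ring is encoded
combinatorially: the number of ways to write an element as a sum `x + y` with `x ∈ X`,
`y ∈ Y` (for blocks `X, Y`) is constant on each block. -/

structure SRing (G : Type*) [AddGroup G] where
  blocks : Set (Set G)
  nonempty_mem : ∀ X ∈ blocks, X.Nonempty
  existsUnique_mem : ∀ g : G, ∃! X, X ∈ blocks ∧ g ∈ X
  zero_mem : ({0} : Set G) ∈ blocks
  neg_mem : ∀ X ∈ blocks, -X ∈ blocks
  count_const : ∀ X ∈ blocks, ∀ Y ∈ blocks, ∀ Z ∈ blocks, ∀ z ∈ Z, ∀ z' ∈ Z,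
    {a : G × G | a.1 ∈ X ∧ a.2 ∈ Y ∧ a.1 + a.2 = z}.ncard =
      {a : G × G | a.1 ∈ X ∧ a.2 ∈ Y ∧ a.1 + a.2 = z'}.ncard

/-- The automorphisms of an S-ring with family of basic sets `Bl`:
permutations preserving each arc set `R(X)`, `X ∈ Bl`. -/
def autPerm {G : Type*} [AddGroup G] (Bl : Set (Set G)) : Set (Equiv.Perm G) :=
  {f | ∀ X ∈ Bl, pmap f (arcs X) = arcs X}

/-- The isomorphisms from an S-ring with basic sets `Bl` onto some S-ring over `G`. -/
def isoPerm {G : Type*} [AddGroup G] (Bl : Set (Set G)) : Set (Equiv.Perm G) :=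
  {f | ∃ B : SRing G,
    {R | ∃ X ∈ Bl, R = pmap f (arcs X)} = {R | ∃ Y ∈ B.blocks, R = arcs Y}}

/-- An S-ring is CI if `iso(A) = Aut(A)Aut(G)` (composition: first the S-ring
automorphism, then the group automorphism). -/
def IsCIBlocks {G : Type*} [AddGroup G] (Bl : Set (Set G)) : Prop :=
  isoPerm Bl = {f | ∃ γ ∈ autPerm Bl, ∃ φ : G ≃+ G, ∀ x, f x = φ (γ x)}

/-- The right translation `x ↦ x + g` as a permutation. -/
def addRightPerm {G : Type*} [AddGroup G] (g : G) : Equiv.Perm G := Equiv.addRight g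

/-- `G_r`, the set of right translations of `G`. -/
def rSet (G : Type*) [AddGroup G] : Set (Equiv.Perm G) := Set.range addRightPerm

/-- The basic sets of `V(K,G)`: the orbits on `G` of the stabilizer `K_e` of the
identity in `K`. -/
def VBlocks {G : Type*} [AddGroup G] (K : Set (Equiv.Perm G)) : Set (Set G) :=
  {O | ∃ g : G, O = {h | ∃ k ∈ K, k 0 = 0 ∧ k g = h}}

/-- An S-ring is schurian if it equals `V(K,G)` for some `G_r ≤ K ≤ Sym(G)`. -/
def IsSchurianBlocks {G : Type*} [AddGroup G] (Bl : Set (Set G)) : Prop :=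
  ∃ K : Subgroup (Equiv.Perm G), rSet G ⊆ (K : Set (Equiv.Perm G)) ∧
    Bl = VBlocks (K : Set (Equiv.Perm G))

/-- `f` lies in the 2-closure of `K`: on every pair it agrees with some member of `K`. -/
def in2Closure {G : Type*} (K : Set (Equiv.Perm G)) (f : Equiv.Perm G) : Prop :=
  ∀ a b : G, ∃ k ∈ K, k a = f a ∧ k b = f b

/-- `K` is 2-closed: `K = K^(2)`. -/
def Is2Closed {G : Type*} (K : Subgroup (Equiv.Perm G)) : Prop :=
  ∀ f, in2Closure (K : Set (Equiv.Perm G)) f → f ∈ K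

/-- Conjugate `S^γ` of a set of permutations. -/
def conjSet {G : Type*} (γ : Equiv.Perm G) (S : Set (Equiv.Perm G)) : Set (Equiv.Perm G) :=
  (fun s => γ⁻¹ * s * γ) '' S

/-- `K1 ⪯_G K2`: `K1` is a `G`-complete subgroup of `K2`. -/
def GComplete {G : Type*} [AddGroup G] (K1 K2 : Subgroup (Equiv.Perm G)) : Prop :=
  K1 ≤ K2 ∧ ∀ γ : Equiv.Perm G, conjSet γ (rSet G) ⊆ (K2 : Set (Equiv.Perm G)) →
    ∃ δ ∈ K2, conjSet δ (conjSet γ (rSet G)) ⊆ (K1 : Set (Equiv.Perm G))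

/-- `K ∈ Sup_2(G_r)`: `K` is a 2-closed subgroup of `Sym(G)` containing `G_r`. -/
def InSup2 {G : Type*} [AddGroup G] (K : Subgroup (Equiv.Perm G)) : Prop :=
  rSet G ⊆ (K : Set (Equiv.Perm G)) ∧ Is2Closed K

/-- `K ∈ Sup_2^min(G_r)`: `K` is a minimal element of `(Sup_2(G_r), ⪯_G)`. -/
def InSup2Min {G : Type*} [AddGroup G] (K : Subgroup (Equiv.Perm G)) : Prop :=
  InSup2 K ∧ ∀ K' : Subgroup (Equiv.Perm G), InSup2 K' → GComplete K' K → K' = K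

/-! ### A-sets, A-subgroups, sections, radicals, products -/

/-- `X` is an `A`-set: a union of basic sets. -/
def IsASet {G : Type*} [AddGroup G] (Bl : Set (Set G)) (X : Set G) : Prop :=
  ∃ C ⊆ Bl, X = ⋃₀ C

/-- An `A`-subgroup. -/
def IsASubgroup {G : Type*} [AddGroup G] (Bl : Set (Set G)) (U : AddSubgroup G) : Prop :=
  IsASet Bl (U : Set G)

/-- The radical `rad(X) = {g : g + X = X + g = X}`. -/
def radSet {G : Type*} [AddGroup G] (X : Set G) : Set G :=
  {g | (fun x => g + x) '' X = X ∧ (fun x => x + g) '' X = X}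

/-- `A` is the `S`-wreath (generalized wreath) product for the section `S = U/L`. -/
def IsWreath {G : Type*} [AddGroup G] (Bl : Set (Set G)) (U L : AddSubgroup G) : Prop :=
  IsASubgroup Bl U ∧ IsASubgroup Bl L ∧ L ≤ U ∧ L.Normal ∧
    ∀ X ∈ Bl, ¬X ⊆ (U : Set G) → (L : Set G) ⊆ radSet X

/-- Nontrivial (proper) `S`-wreath product. -/
def IsNontrivialWreath {G : Type*} [AddGroup G] (Bl : Set (Set G))
    (U L : AddSubgroup G) : Prop :=
  IsWreath Bl U L ∧ L ≠ ⊥ ∧ U ≠ ⊤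

/-- `A` is decomposable: a nontrivial generalized wreath product. -/
def IsDecomposable {G : Type*} [AddGroup G] (Bl : Set (Set G)) : Prop :=
  ∃ U L : AddSubgroup G, IsNontrivialWreath Bl U L

/-! ### Cyclotomic S-rings, Cayley minimality, 2-minimality, normality -/

/-- The set of orbits on `G` of a group `M` of automorphisms of `G`. -/
def autOrbits {G : Type*} [AddGroup G] (M : AddSubgroup (AddAut G)) : Set (Set G) :=
  {O | ∃ g : G, O = {h | ∃ φ ∈ M, φ g = h}}

/-- An S-ring is cyclotomic if its basic sets are the orbits of a group of
automorphisms of `G`. -/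
def IsCyclotomic {G : Type*} [AddGroup G] (Bl : Set (Set G)) : Prop :=
  ∃ M : AddSubgroup (AddAut G), Bl = autOrbits M

/-- `aut_G(A) = Aut(A) ∩ Aut(G)`. -/
def autAddSet {G : Type*} [AddGroup G] (Bl : Set (Set G)) : Set (AddAut G) :=
  {φ | (φ : G ≃+ G).toEquiv ∈ autPerm Bl}

/-- Two sets of automorphisms have the same orbits on `G`. -/
def sameAutOrbits {G : Type*} [AddGroup G] (K M : Set (AddAut G)) : Prop :=
  ∀ g : G, {h | ∃ φ ∈ K, φ g = h} = {h | ∃ φ ∈ M, φ g = h}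

/-- A (cyclotomic) S-ring is Cayley minimal if the only subgroup of `Aut(G)` Cayley
equivalent to `aut_G(A)` is `aut_G(A)` itself. -/
def IsCayleyMinimal {G : Type*} [AddGroup G] (Bl : Set (Set G)) : Prop :=
  IsCyclotomic Bl ∧ ∀ K : AddSubgroup (AddAut G),
    sameAutOrbits (K : Set (AddAut G)) (autAddSet Bl) →
      (K : Set (AddAut G)) = autAddSet Bl

/-- Two sets of permutations have the same orbits on `G × G`. -/
def samePairOrbits {G : Type*} (K M : Set (Equiv.Perm G)) : Prop :=
  ∀ a b : G, {c : G × G | ∃ f ∈ K, (f a, f b) = c} = {c : G × G | ∃ f ∈ M, (f a, f b) = c}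

/-- An S-ring is 2-minimal if the only subgroup of `Sym(G)` containing `G_r` and
2-equivalent to `Aut(A)` is `Aut(A)` itself. -/
def Is2Minimal {G : Type*} [AddGroup G] (Bl : Set (Set G)) : Prop :=
  ∀ K : Subgroup (Equiv.Perm G), rSet G ⊆ (K : Set (Equiv.Perm G)) →
    samePairOrbits (K : Set (Equiv.Perm G)) (autPerm Bl) →
      (K : Set (Equiv.Perm G)) = autPerm Bl

/-- An S-ring is normal if `G_r` is normal in `Aut(A)`. -/
def IsNormalBlocks {G : Type*} [AddGroup G] (Bl : Set (Set G)) : Prop :=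
  ∀ σ ∈ autPerm Bl, ∀ t ∈ rSet G, σ * t * σ⁻¹ ∈ rSet G

/-- A set of permutations normalizes another one. -/
def normalizesInto {M : Type*} [Group M] (Δ N : Set M) : Prop :=
  ∀ σ ∈ Δ, ∀ t ∈ N, σ * t * σ⁻¹ ∈ N

/-! ### Kernels, restriction to subgroups, quotients and sections -/

/-- `Aut(A)_{G/L}`: the automorphisms of the S-ring fixing every `L`-coset setwise. -/
def kernelPerm {G : Type*} [AddGroup G] (Bl : Set (Set G)) (L : AddSubgroup G) :
    Set (Equiv.Perm G) :=
  {f | f ∈ autPerm Bl ∧ ∀ g : G, ⇑f '' ((L : Set G) + {g}) = (L : Set G) + {g}}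

/-- The basic sets of `A_U` (for an `A`-subgroup `U`), as subsets of `U`. -/
def subBlocks {G : Type*} [AddGroup G] (Bl : Set (Set G)) (U : AddSubgroup G) :
    Set (Set U) :=
  {Z | ∃ X ∈ Bl, X ⊆ (U : Set G) ∧ Z = ((Subtype.val) ⁻¹' X : Set U)}

/-- The basic sets of `A_{G/L}`: images of basic sets under `G → G/L`. -/
def quotBlocks {G : Type*} [AddGroup G] (Bl : Set (Set G)) (L : AddSubgroup G) :
    Set (Set (G ⧸ L)) :=
  {Z | ∃ X ∈ Bl, Z = (QuotientAddGroup.mk : G → G ⧸ L) '' X}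

/-- The basic sets of `A_S` for the section `S = U/L`: images under `U → U/L` of the
basic sets contained in `U`. -/
def secBlocks {G : Type*} [AddGroup G] (Bl : Set (Set G)) (U L : AddSubgroup G) :
    Set (Set (U ⧸ L.addSubgroupOf U)) :=
  {Z | ∃ X ∈ Bl, X ⊆ (U : Set G) ∧
    Z = (QuotientAddGroup.mk : U → U ⧸ L.addSubgroupOf U) '' {u : U | (u : G) ∈ X}}

/-- The permutations of an (invariant) subgroup `U` induced by members of `F`. -/
def inducedPerm {G : Type*} [AddGroup G] (F : Set (Equiv.Perm G)) (U : AddSubgroup G) :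
    Set (Equiv.Perm U) :=
  {σ | ∃ f ∈ F, ∀ x : U, (σ x : G) = f (x : G)}

/-- The automorphisms of an (invariant) subgroup `U` induced by members of `F ⊆ Aut(G)`. -/
def inducedAddAut {G : Type*} [AddGroup G] (F : Set (AddAut G)) (U : AddSubgroup G) :
    Set (AddAut U) :=
  {σ | ∃ φ ∈ F, ∀ x : U, ((σ x : U) : G) = φ (x : G)}

/-- `S^f = S`: the permutation `f` maps `U` onto itself and permutes the `L`-cosets
inside `U`. -/
def secInvariant {G : Type*} [AddGroup G] (f : Equiv.Perm G) (U L : AddSubgroup G) : Prop :=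
  ⇑f '' (U : Set G) = (U : Set G) ∧
    ∀ u ∈ U, ⇑f '' ((L : Set G) + {u}) = (L : Set G) + {f u}

/-- `σ` is the bijection `f^S` of the section `S = U/L` induced by `f`. -/
def inducesOnSec {G : Type*} [AddGroup G] (f : Equiv.Perm G) (U L : AddSubgroup G)
    (σ : Equiv.Perm (U ⧸ L.addSubgroupOf U)) : Prop :=
  ∀ u v : U, f (u : G) = (v : G) →
    σ (QuotientAddGroup.mk u) = QuotientAddGroup.mk v

/-- `Δ^S`: the bijections of the section `S = U/L` induced by members of `Δ`
leaving `S` invariant. -/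
def secPerms {G : Type*} [AddGroup G] (F : Set (Equiv.Perm G)) (U L : AddSubgroup G) :
    Set (Equiv.Perm (U ⧸ L.addSubgroupOf U)) :=
  {σ | ∃ f ∈ F, secInvariant f U L ∧ inducesOnSec f U L σ}

/-- `K^S` for `K ≤ Aut(U)`: automorphisms of `S = U/L` induced by members of `K`. -/
def secAutOfSub {G : Type*} [AddCommGroup G] (U L : AddSubgroup G)
    (K : Set (AddAut U)) : Set (AddAut (U ⧸ L.addSubgroupOf U)) :=
  {ψ | ∃ φ ∈ K, ∀ u : U, ψ (QuotientAddGroup.mk u) = QuotientAddGroup.mk (φ u)}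

/-- `K^S` for `K ≤ Aut(G/L)`: automorphisms of `S = U/L` obtained by restricting
members of `K`. -/
def secAutOfQuot {G : Type*} [AddCommGroup G] (U L : AddSubgroup G)
    (K : Set (AddAut (G ⧸ L))) : Set (AddAut (U ⧸ L.addSubgroupOf U)) :=
  {ψ | ∃ φ ∈ K, ∀ u v : U,
    φ (QuotientAddGroup.mk (u : G)) = QuotientAddGroup.mk (v : G) →
      ψ (QuotientAddGroup.mk u) = QuotientAddGroup.mk v}

/-! ### p-S-rings and some particular S-rings -/

/-- A `p`-S-ring: all basic sets have `p`-power size. -/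
def IsPSRing {G : Type*} [AddGroup G] (p : ℕ) (Bl : Set (Set G)) : Prop :=
  ∀ X ∈ Bl, ∃ k : ℕ, X.ncard = p ^ k

/-- The family `Bl` of basic sets is that of `ℤC_p ≀ ℤC_p ≀ ℤC_p`: singletons in `B1`,
`B1`-cosets in `B2 \ B1`, and `B2`-cosets outside `B2`. -/
def IsWr3Blocks {G : Type*} [AddGroup G] (p : ℕ) (Bl : Set (Set G)) : Prop :=
  ∃ B1 B2 : AddSubgroup G, B1 < B2 ∧ (B1 : Set G).ncard = p ∧
    (B2 : Set G).ncard = p ^ 2 ∧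
    ∀ X : Set G, X ∈ Bl ↔
      ((∃ x ∈ B1, X = {x}) ∨
        (∃ x ∈ (B2 : Set G) \ (B1 : Set G), X = (B1 : Set G) + {x}) ∨
        (∃ x ∈ (Set.univ : Set G) \ (B2 : Set G), X = (B2 : Set G) + {x}))

/-- The family `Bl` of basic sets is that of `ℤC_p ≀ ℤC_p²`: singletons in `B1` and
`B1`-cosets outside `B1`. -/
def IsWrCpCp2Blocks {G : Type*} [AddGroup G] (p : ℕ) (Bl : Set (Set G)) : Prop :=
  ∃ B1 : AddSubgroup G, (B1 : Set G).ncard = p ∧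
    ∀ X : Set G, X ∈ Bl ↔
      ((∃ x ∈ B1, X = {x}) ∨ (∃ x : G, x ∉ B1 ∧ X = (B1 : Set G) + {x}))

/-- The unipotent map `σ(x,y,z) = (x, x+y, y+z)` on `(ℤ/p)³` defining `D_p`. -/
def dpStep (p : ℕ) (v : Fin 3 → ZMod p) : Fin 3 → ZMod p :=
  ![v 0, v 0 + v 1, v 1 + v 2]

/-- The orbit of a point under the cyclic group generated by `σ`. -/
def dpOrbit (p : ℕ) (x : Fin 3 → ZMod p) : Set (Fin 3 → ZMod p) :=
  {y | ∃ k : ℕ, (dpStep p)^[k] x = y}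

/-- The family `Bl` of basic sets is (isomorphic to) that of the S-ring `D_p`. -/
def IsDpBlocks {W : Type*} [AddGroup W] (p : ℕ) (Bl : Set (Set W)) : Prop :=
  ∃ e : W ≃+ (Fin 3 → ZMod p), (fun X => ⇑e '' X) '' Bl = Set.range (dpOrbit p)

/-! ### Cayley graph automorphisms and regular subgroups -/

/-- `Aut(Cay(G,X))`. -/
def autCaySet {G : Type*} [AddGroup G] (X : Set G) : Set (Equiv.Perm G) :=
  {f | pmap f (arcs X) = arcs X}

/-- A regular subgroup of `Sym(G)`: transitive, and only the identity has a fixed point. -/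
def IsRegularSubgroup {G : Type*} (K : Subgroup (Equiv.Perm G)) : Prop :=
  (∀ a b : G, ∃ k ∈ K, k a = b) ∧ ∀ k ∈ K, (∃ a : G, k a = a) → k = 1

/-! ### The groups `C_p^4 × C_q` -/

/-- The Sylow `p`-subgroup `P` of `C_p^4 × C_q`. -/
def Psub (p q : ℕ) : AddSubgroup ((Fin 4 → ZMod p) × ZMod q) :=
  (⊤ : AddSubgroup (Fin 4 → ZMod p)).prod ⊥

/-- The Sylow `q`-subgroup `Q` of `C_p^4 × C_q`. -/
def Qsub (p q : ℕ) : AddSubgroup ((Fin 4 → ZMod p) × ZMod q) :=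
  (⊥ : AddSubgroup (Fin 4 → ZMod p)).prod ⊤

/-!
An isomorphism `f : Cay(G,S) → Cay(G,T)` conjugates `G_r` into `F = Aut(Cay(G,S))`, a 2-closed
overgroup of `G_r`. Pick `K ∈ Sup_2^min(G_r)` with `K ⪯_G F`; correcting `f` by some `δ ∈ F` we get
`g = fδ`, still an isomorphism onto `Cay(G,T)`, with `(G_r)^g ≤ K`. Since the basic relations of
`V(K,G)` are the 2-orbits of `K`, `g` maps them onto the 2-orbits of `K^(g⁻¹) ≥ G_r`, i.e. onto the
basic relations of another S-ring, so `g ∈ iso(V(K,G)) = Aut(V(K,G)) Aut(G)`. Write `g = φ ∘ γ`.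
As `K ≤ F`, the set `S` is a union of basic sets of `V(K,G)`, so `γ` fixes `R(S)` and `φ(S) = T`.
-/

section

variable {G : Type*}

lemma pmap_eq_smul (f : Equiv.Perm G) (R : Set (G × G)) : pmap f R = f • R := rfl

lemma conjSet_conjSet (δ γ : Equiv.Perm G) (N : Set (Equiv.Perm G)) :
    conjSet δ (conjSet γ N) = conjSet (γ * δ) N := by
  simp only [conjSet, Set.image_image, mul_inv_rev, mul_assoc]

lemma smul_orbit_eq_orbit_map {M α : Type*} [Group M] [MulAction M α] (g : M) (K : Subgroup M)
    (p : α) : g • MulAction.orbit K p = MulAction.orbit (K.map (MulAut.conj g).toMonoidHom) (g • p) := by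
  ext q
  simp only [Set.mem_smul_set, MulAction.mem_orbit_iff, Subtype.exists, Subgroup.mem_map,
    Subgroup.smul_def]
  constructor
  · rintro ⟨_, ⟨k, hk, rfl⟩, rfl⟩
    exact ⟨_, ⟨k, hk, rfl⟩, by simp [mul_smul]⟩
  · rintro ⟨_, ⟨k, hk, rfl⟩, rfl⟩
    exact ⟨_, ⟨k, hk, rfl⟩, by simp [mul_smul]⟩

variable [AddGroup G]

lemma mem_arcs {S : Set G} {p : G × G} : p ∈ arcs S ↔ p.2 - p.1 ∈ S := by
  constructor
  · rintro ⟨s, hs, h⟩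
    simpa [h] using hs
  · intro h
    exact ⟨p.2 - p.1, h, (sub_add_cancel _ _).symm⟩

lemma arcs_injective : Function.Injective (arcs : Set G → Set (G × G)) := by
  intro S T h
  ext x
  simpa [mem_arcs] using Set.ext_iff.1 h (0, x)

lemma arcs_sUnion (C : Set (Set G)) : arcs (⋃₀ C) = ⋃ X ∈ C, arcs X := by
  ext p
  simp [mem_arcs]

lemma apply_mem_arcs_iff {f : Equiv.Perm G} {X : Set G} (hf : f • arcs X = arcs X)
    {a b : G} : (f a, f b) ∈ arcs X ↔ (a, b) ∈ arcs X := by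
  conv_lhs => rw [← hf]
  exact Set.smul_mem_smul_set_iff (a := f) (x := (a, b))

lemma addRightPerm_smul_arcs (c : G) (S : Set G) : addRightPerm c • arcs S = arcs S := by
  ext p
  refine ⟨?_, fun hp => ⟨(p.1 - c, p.2 - c), ?_, ?_⟩⟩
  · rintro ⟨q, hq, rfl⟩
    rw [mem_arcs] at hq ⊢
    simpa [addRightPerm, add_sub_add_right_eq_sub] using hq
  · rw [mem_arcs] at hp ⊢
    simpa [sub_sub_sub_cancel_right] using hp
  · simp [addRightPerm]

lemma addEquiv_smul_arcs (φ : G ≃+ G) (S : Set G) :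
    (φ.toEquiv : Equiv.Perm G) • arcs S = arcs (⇑φ '' S) := by
  ext p
  constructor
  · rintro ⟨q, hq, rfl⟩
    rw [mem_arcs]
    exact ⟨q.2 - q.1, mem_arcs.1 hq, map_sub φ q.2 q.1⟩
  · intro hp
    obtain ⟨s, hs, hφs⟩ := mem_arcs.1 hp
    refine ⟨(φ.symm p.1, φ.symm p.2), ?_, by simp⟩
    rw [mem_arcs, ← map_sub, ← hφs]
    simpa using hs

lemma smul_arcs_of_isASet {Bl : Set (Set G)} {S : Set G} (hS : IsASet Bl S)
    {f : Equiv.Perm G} (hf : f ∈ autPerm Bl) : f • arcs S = arcs S := by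
  obtain ⟨C, hCBl, rfl⟩ := hS
  rw [arcs_sUnion, Set.smul_set_iUnion₂]
  exact Set.iUnion₂_congr fun X hX => hf X (hCBl hX)

def autCay (S : Set G) : Subgroup (Equiv.Perm G) :=
  MulAction.stabilizer (Equiv.Perm G) (arcs S)

lemma mem_autCay {S : Set G} {f : Equiv.Perm G} : f ∈ autCay S ↔ f • arcs S = arcs S :=
  MulAction.mem_stabilizer_iff

lemma rSet_subset_autCay (S : Set G) : rSet G ⊆ (autCay S : Set (Equiv.Perm G)) := by
  rintro _ ⟨c, rfl⟩
  exact addRightPerm_smul_arcs c S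

lemma is2Closed_autCay [Finite G] (S : Set G) : Is2Closed (autCay S) := by
  intro f hf
  rw [mem_autCay]
  refine Set.eq_of_subset_of_ncard_le ?_ (Set.ncard_smul_set f _).ge (Set.toFinite _)
  rintro _ ⟨⟨a, b⟩, hab, rfl⟩
  obtain ⟨k, hk, hka, hkb⟩ := hf a b
  change (f a, f b) ∈ arcs S
  rw [← hka, ← hkb]
  exact (apply_mem_arcs_iff (mem_autCay.1 hk)).2 hab

lemma inSup2_autCay [Finite G] (S : Set G) : InSup2 (autCay S) :=
  ⟨rSet_subset_autCay S, is2Closed_autCay S⟩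

lemma conjSet_rSet_subset_autCay {S T : Set G} {f : Equiv.Perm G}
    (hf : f • arcs S = arcs T) : conjSet f (rSet G) ⊆ (autCay S : Set (Equiv.Perm G)) := by
  rintro _ ⟨_, ⟨c, rfl⟩, rfl⟩
  rw [SetLike.mem_coe, mem_autCay, mul_smul, mul_smul, hf, addRightPerm_smul_arcs, ← hf,
    inv_smul_smul]

lemma GComplete.refl (K : Subgroup (Equiv.Perm G)) : GComplete K K :=
  ⟨le_rfl, fun γ hγ => ⟨1, K.one_mem, by simpa [conjSet] using hγ⟩⟩

lemma GComplete.trans {K₁ K₂ K₃ : Subgroup (Equiv.Perm G)}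
    (h₁₂ : GComplete K₁ K₂) (h₂₃ : GComplete K₂ K₃) : GComplete K₁ K₃ := by
  refine ⟨h₁₂.1.trans h₂₃.1, fun γ hγ => ?_⟩
  obtain ⟨δ, hδ, hγδ⟩ := h₂₃.2 γ hγ
  rw [conjSet_conjSet] at hγδ
  obtain ⟨δ', hδ', hγδδ'⟩ := h₁₂.2 (γ * δ) hγδ
  refine ⟨δ * δ', K₃.mul_mem hδ (h₂₃.1 hδ'), ?_⟩
  rwa [conjSet_conjSet, ← mul_assoc, ← conjSet_conjSet]

lemma exists_inSup2Min_gComplete [Finite G] {F : Subgroup (Equiv.Perm G)} (hF : InSup2 F) :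
    ∃ K, InSup2Min K ∧ GComplete K F := by
  obtain ⟨K, hK⟩ := (Set.toFinite {K | InSup2 K ∧ GComplete K F}).exists_minimal
    ⟨F, hF, GComplete.refl F⟩
  exact ⟨K, ⟨hK.prop.1, fun K' hK' hK'K => hK.eq_of_le ⟨hK', hK'K.trans hK.prop.2⟩ hK'K.1⟩,
    hK.prop.2⟩

/-- The basic set of `V(K,G)` containing `g`. -/
def stabOrbit (K : Subgroup (Equiv.Perm G)) (g : G) : Set G :=
  {h | ∃ k ∈ K, k 0 = 0 ∧ k g = h}

variable {K : Subgroup (Equiv.Perm G)}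

lemma mem_stabOrbit_self (g : G) : g ∈ stabOrbit K g :=
  ⟨1, K.one_mem, rfl, rfl⟩

lemma stabOrbit_zero : stabOrbit K 0 = {0} := by
  ext x
  constructor
  · rintro ⟨k, -, hk0, rfl⟩
    exact hk0
  · rintro rfl
    exact mem_stabOrbit_self 0

lemma exists_apply_eq_of_mem_stabOrbit {z₀ z z' : G} (hz : z ∈ stabOrbit K z₀)
    (hz' : z' ∈ stabOrbit K z₀) : ∃ k ∈ K, k 0 = 0 ∧ k z = z' := by
  obtain ⟨k₁, hk₁, hk₁0, rfl⟩ := hz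
  obtain ⟨k₂, hk₂, hk₂0, rfl⟩ := hz'
  refine ⟨k₂ * k₁⁻¹, K.mul_mem hk₂ (K.inv_mem hk₁), ?_, ?_⟩
  · rw [Equiv.Perm.mul_apply, Equiv.Perm.inv_eq_iff_eq.2 hk₁0.symm, hk₂0]
  · simp

lemma addRightPerm_mem (hK : rSet G ⊆ K) (c : G) : addRightPerm c ∈ K :=
  hK ⟨c, rfl⟩

lemma arcs_stabOrbit (hK : rSet G ⊆ K) (g : G) :
    arcs (stabOrbit K g) = MulAction.orbit K ((0 : G), g) := by
  ext p
  rw [mem_arcs, MulAction.mem_orbit_iff]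
  constructor
  · rintro ⟨k, hk, hk0, hkg⟩
    refine ⟨⟨addRightPerm p.1 * k, K.mul_mem (addRightPerm_mem hK _) hk⟩, Prod.ext ?_ ?_⟩
    · simp [Subgroup.smul_def, addRightPerm, hk0]
    · simp [Subgroup.smul_def, addRightPerm, hkg]
  · rintro ⟨⟨k, hk⟩, rfl⟩
    refine ⟨addRightPerm (-k 0) * k, K.mul_mem (addRightPerm_mem hK _) hk, ?_, ?_⟩
    · simp [addRightPerm]
    · simp [Subgroup.smul_def, addRightPerm, sub_eq_add_neg]

lemma stabOrbit_eq_of_mem (hK : rSet G ⊆ K) {g h : G} (hh : h ∈ stabOrbit K g) :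
    stabOrbit K h = stabOrbit K g := by
  apply arcs_injective
  rw [arcs_stabOrbit hK, arcs_stabOrbit hK, MulAction.orbit_eq_iff, ← arcs_stabOrbit hK,
    mem_arcs, sub_zero]
  exact hh

lemma smul_arcs_stabOrbit (hK : rSet G ⊆ K) {k : Equiv.Perm G} (hk : k ∈ K) (g : G) :
    k • arcs (stabOrbit K g) = arcs (stabOrbit K g) := by
  rw [arcs_stabOrbit hK]
  exact MulAction.smul_orbit (⟨k, hk⟩ : K) _

lemma subset_autPerm_VBlocks (hK : rSet G ⊆ K) :
    (K : Set (Equiv.Perm G)) ⊆ autPerm (VBlocks (K : Set (Equiv.Perm G))) := by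
  rintro k hk _ ⟨g, rfl⟩
  exact smul_arcs_stabOrbit hK hk g

lemma neg_mem_stabOrbit_neg (hK : rSet G ⊆ K) {g x : G} (hx : x ∈ stabOrbit K g) :
    -x ∈ stabOrbit K (-g) := by
  obtain ⟨k, hk, hk0, rfl⟩ := hx
  have hg : (g, (0 : G)) ∈ arcs (stabOrbit K (-g)) := by
    rw [mem_arcs, zero_sub]
    exact mem_stabOrbit_self _
  rw [← apply_mem_arcs_iff (smul_arcs_stabOrbit hK hk _), mem_arcs] at hg
  simpa [hk0] using hg

lemma stabOrbit_neg (hK : rSet G ⊆ K) (g : G) : stabOrbit K (-g) = -stabOrbit K g := by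
  ext x
  rw [Set.mem_neg]
  refine ⟨fun hx => ?_, fun hx => ?_⟩
  · simpa using neg_mem_stabOrbit_neg hK hx
  · simpa using neg_mem_stabOrbit_neg hK hx

lemma addPairs_eq_image (X Y : Set G) (z : G) :
    {a : G × G | a.1 ∈ X ∧ a.2 ∈ Y ∧ a.1 + a.2 = z} =
      (fun b => (z - b, b)) '' {b | (0, b) ∈ arcs Y ∧ (b, z) ∈ arcs X} := by
  ext ⟨a, b⟩
  simp only [Set.mem_ofPred_eq, Set.mem_image, mem_arcs, sub_zero, Prod.mk.injEq]
  constructor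
  · rintro ⟨ha, hb, rfl⟩
    exact ⟨b, ⟨hb, by simpa using ha⟩, by simp, rfl⟩
  · rintro ⟨b, ⟨hb, ha⟩, rfl, rfl⟩
    exact ⟨ha, hb, sub_add_cancel _ _⟩

lemma ncard_addPairs_apply_eq {X Y : Set G} {k : Equiv.Perm G} (hX : k • arcs X = arcs X)
    (hY : k • arcs Y = arcs Y) (hk0 : k 0 = 0) (z : G) :
    {a : G × G | a.1 ∈ X ∧ a.2 ∈ Y ∧ a.1 + a.2 = k z}.ncard =
      {a : G × G | a.1 ∈ X ∧ a.2 ∈ Y ∧ a.1 + a.2 = z}.ncard := by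
  have hinj (w : G) : Function.Injective fun b : G => (w - b, b) :=
    fun b b' h => congrArg Prod.snd h
  -- `b ↦ (z - b, b)` identifies the pairs counted with the paths `0 → b → z` whose first arc
  -- lies in `R(Y)` and second in `R(X)`; `k` maps those ending at `z` onto those ending at `k z`.
  have hpaths : {b | (0, b) ∈ arcs Y ∧ (b, z) ∈ arcs X} =
      k ⁻¹' {b | (0, b) ∈ arcs Y ∧ (b, k z) ∈ arcs X} := by
    ext c
    change (0, c) ∈ arcs Y ∧ (c, z) ∈ arcs X ↔ (0, k c) ∈ arcs Y ∧ (k c, k z) ∈ arcs X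
    conv_rhs => rw [← hk0, apply_mem_arcs_iff hY, apply_mem_arcs_iff hX]
  rw [addPairs_eq_image, addPairs_eq_image, Set.ncard_image_of_injective _ (hinj _),
    Set.ncard_image_of_injective _ (hinj _), hpaths,
    Set.ncard_preimage_of_injective_subset_range k.injective (by simp)]

def vSRing (K : Subgroup (Equiv.Perm G)) (hK : rSet G ⊆ K) : SRing G where
  blocks := VBlocks (K : Set (Equiv.Perm G))
  nonempty_mem := by
    rintro _ ⟨g, rfl⟩
    exact ⟨g, mem_stabOrbit_self g⟩
  existsUnique_mem g := by
    refine ⟨stabOrbit K g, ⟨⟨g, rfl⟩, mem_stabOrbit_self g⟩, ?_⟩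
    rintro _ ⟨⟨h, rfl⟩, hg⟩
    exact (stabOrbit_eq_of_mem hK hg).symm
  zero_mem := ⟨0, stabOrbit_zero.symm⟩
  neg_mem := by
    rintro _ ⟨g, rfl⟩
    exact ⟨-g, (stabOrbit_neg hK g).symm⟩
  count_const := by
    rintro X hX Y hY _ ⟨z₀, rfl⟩ z hz z' hz'
    obtain ⟨k, hk, hk0, rfl⟩ := exists_apply_eq_of_mem_stabOrbit hz hz'
    exact (ncard_addPairs_apply_eq (subset_autPerm_VBlocks hK hk X hX)
      (subset_autPerm_VBlocks hK hk Y hY) hk0 z).symm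

lemma vSRing_blocks (hK : rSet G ⊆ K) : (vSRing K hK).blocks = VBlocks (K : Set (Equiv.Perm G)) :=
  rfl

lemma image_arcs_VBlocks (hK : rSet G ⊆ K) :
    arcs '' VBlocks (K : Set (Equiv.Perm G)) = Set.range (MulAction.orbit K) := by
  ext R
  constructor
  · rintro ⟨_, ⟨g, rfl⟩, rfl⟩
    exact ⟨(0, g), (arcs_stabOrbit hK g).symm⟩
  · rintro ⟨p, rfl⟩
    refine ⟨stabOrbit K (p.2 - p.1), ⟨_, rfl⟩, ?_⟩
    rw [arcs_stabOrbit hK, ← MulAction.orbit_smul (⟨_, addRightPerm_mem hK (-p.1)⟩ : K) p]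
    congr 1
    ext <;> simp [Subgroup.smul_def, addRightPerm, sub_eq_add_neg]

lemma rSet_subset_map_conj {g : Equiv.Perm G} (hg : conjSet g (rSet G) ⊆ K) :
    rSet G ⊆ K.map (MulAut.conj g).toMonoidHom := by
  intro t ht
  rw [SetLike.mem_coe, Subgroup.mem_map_equiv]
  simpa [MulAut.conj_symm_apply] using hg ⟨t, ht, rfl⟩

lemma mem_isoPerm_VBlocks (hK : rSet G ⊆ K) {g : Equiv.Perm G}
    (hg : conjSet g (rSet G) ⊆ K) : g ∈ isoPerm (VBlocks (K : Set (Equiv.Perm G))) := by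
  have hg' := rSet_subset_map_conj hg
  refine ⟨vSRing _ hg', ?_⟩
  have himage {B : Set (Set G)} (F : Set G → Set (G × G)) :
      {R | ∃ X ∈ B, R = F X} = F '' B := by
    ext R
    simp [eq_comm]
  -- `g` carries the 2-orbits of `K` onto those of `g K g⁻¹`.
  simp only [pmap_eq_smul]
  rw [vSRing_blocks, himage (fun X => g • arcs X), himage arcs,
    ← Set.image_image (fun R : Set (G × G) => g • R) arcs, image_arcs_VBlocks hK,
    image_arcs_VBlocks hg', ← Set.range_comp]
  simp only [Function.comp_def, smul_orbit_eq_orbit_map]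
  exact (MulAction.surjective (β := G × G) g).range_comp (MulAction.orbit _)

lemma isASet_VBlocks_of_le_autCay {S : Set G} (hKS : K ≤ autCay S) :
    IsASet (VBlocks (K : Set (Equiv.Perm G))) S := by
  refine ⟨{X | X ∈ VBlocks (K : Set (Equiv.Perm G)) ∧ X ⊆ S}, fun _ hX => hX.1, ?_⟩
  ext s
  refine ⟨fun hs => ⟨stabOrbit K s, ⟨⟨s, rfl⟩, ?_⟩, mem_stabOrbit_self s⟩, ?_⟩
  · rintro _ ⟨k, hk, hk0, rfl⟩
    have h0s : ((0 : G), s) ∈ arcs S := mem_arcs.2 (by simpa using hs)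
    rw [← apply_mem_arcs_iff (mem_autCay.1 (hKS hk)), mem_arcs] at h0s
    simpa [hk0] using h0s
  · rintro ⟨X, ⟨-, hXS⟩, hsX⟩
    exact hXS hsX

end

/-- If `V(K,G)` is a CI-S-ring for every `K ∈ Sup_2^min(G_r)`, then
`G` is a DCI-group. -/
theorem statement2 (G : Type*) [AddGroup G] [Finite G]
    (h : ∀ K : Subgroup (Equiv.Perm G), InSup2Min K →
      ∀ A : SRing G, A.blocks = VBlocks (K : Set (Equiv.Perm G)) → IsCIBlocks A.blocks) :
    IsDCI G := by
  rintro S T ⟨f, hf⟩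
  rw [pmap_eq_smul] at hf
  obtain ⟨K, hKmin, hKS⟩ := exists_inSup2Min_gComplete (inSup2_autCay S)
  have hK : rSet G ⊆ K := hKmin.1.1
  obtain ⟨δ, hδ, hconj⟩ := hKS.2 f (conjSet_rSet_subset_autCay hf)
  rw [conjSet_conjSet] at hconj
  have hiso := mem_isoPerm_VBlocks hK hconj
  rw [← vSRing_blocks hK, h K hKmin (vSRing K hK) rfl] at hiso
  obtain ⟨γ, hγ, φ, hφ⟩ := hiso
  have hfδ : f * δ = (φ.toEquiv : Equiv.Perm G) * γ := Equiv.ext hφ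
  refine ⟨φ, arcs_injective ?_⟩
  calc arcs (φ '' S) = (φ.toEquiv : Equiv.Perm G) • arcs S := (addEquiv_smul_arcs φ S).symm
    _ = (φ.toEquiv : Equiv.Perm G) • γ • arcs S := by
      rw [smul_arcs_of_isASet (isASet_VBlocks_of_le_autCay hKS.1) hγ]
    _ = f • δ • arcs S := by rw [← mul_smul, ← mul_smul, hfδ]
    _ = arcs T := by rw [mem_autCay.1 hδ, hf]
end

section
/- Let G be an elementary abelian p-group, let A be an S-ring over G, and let S = U/L be an A-section of G. Suppose that A is the nontrivial S-wreath product, that A_U = cyc(K1, U) for some K1 ≤ Aut(U), and that A_{G/L} = cyc(K2, G/L) for some K2 ≤ Aut(G/L). If K1^S = K2^S, then A is cyclotomic. -/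
open Pointwise

/-! Let `M ≤ Aut(G)` consist of the automorphisms that restrict to an element of `K1` on `U`
and induce an element of `K2` on `G/L`. As `G` is a vector space over `𝔽_p`, automorphisms
`φ1` of `U` and `φ2` of `G/L` that agree on `U/L` glue to an automorphism of `G`, and
`K1^S = K2^S` says that every element of `K1` agrees on `S` with some element of `K2` and vice
versa. Hence `M` induces all of `K1` on `U` and all of `K2` on `G/L`, so the basic sets inside
`U` are `M`-orbits. Outside `U` the basic sets are unions of `L`-cosets, and so are the
`M`-orbits, because `M` contains the transvections `g ↦ g + f(g) • l` with `f` vanishing on `U`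
and `l ∈ L`; both are then the preimages of the `K2`-orbits on `G/L`. -/

section Orbits

variable {H : Type*} [AddGroup H] {M : AddSubgroup (AddAut H)}

lemma orbit_eq_setOf (g : H) :
    AddAction.orbit M g = {h | ∃ φ ∈ M, φ g = h} := by
  ext h
  simp [AddAction.mem_orbit_iff, AddAut.vadd_def]

lemma eq_orbit_of_mem_autOrbits {O : Set H} (hO : O ∈ autOrbits M) {x : H} (hx : x ∈ O) :
    O = AddAction.orbit M x := by
  obtain ⟨g, rfl⟩ := hO
  rw [← orbit_eq_setOf] at hx ⊢
  exact (AddAction.orbit_eq_iff.mpr hx).symm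

lemma IsASet.apply_mem {Y : Set H} (hY : IsASet (autOrbits M) Y) {φ : AddAut H} (hφ : φ ∈ M)
    {y : H} (hy : y ∈ Y) : φ y ∈ Y := by
  obtain ⟨C, hC, rfl⟩ := hY
  obtain ⟨O, hOC, hyO⟩ := hy
  refine ⟨O, hOC, ?_⟩
  rw [eq_orbit_of_mem_autOrbits (hC hOC) hyO]
  exact AddAction.mem_orbit y (⟨φ, hφ⟩ : M)

lemma AddSubgroup.map_eq_self_of_forall_apply_mem {R : AddSubgroup H}
    (hR : ∀ φ ∈ M, ∀ x ∈ R, φ x ∈ R) {φ : AddAut H} (hφ : φ ∈ M) :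
    R.map (φ : H →+ H) = R := by
  refine le_antisymm (AddSubgroup.map_le_iff_le_comap.mpr fun x hx => hR φ hφ x hx)
    fun x hx => ⟨(-φ) x, hR _ (neg_mem hφ) x hx, AddAut.apply_neg_self _ φ x⟩

end Orbits

section Blocks

variable {G : Type*} [AddGroup G]

lemma SRing.subset_of_isASet (A : SRing G) {Y : Set G} (hY : IsASet A.blocks Y)
    {X : Set G} (hX : X ∈ A.blocks) {x : G} (hxX : x ∈ X) (hxY : x ∈ Y) : X ⊆ Y := by
  obtain ⟨C, hC, rfl⟩ := hY
  obtain ⟨Z, hZC, hxZ⟩ := hxY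
  obtain ⟨_, _, huniq⟩ := A.existsUnique_mem x
  rw [huniq X ⟨hX, hxX⟩, ← huniq Z ⟨hC hZC, hxZ⟩]
  exact Set.subset_sUnion_of_mem hZC

lemma SRing.blocks_eq_autOrbits (A : SRing G) (M : AddSubgroup (AddAut G))
    (h : ∀ X ∈ A.blocks, ∀ x ∈ X, AddAction.orbit M x = X) : A.blocks = autOrbits M := by
  ext O
  constructor
  · intro hO
    obtain ⟨x, hx⟩ := A.nonempty_mem O hO
    exact ⟨x, by rw [← orbit_eq_setOf, h O hO x hx]⟩
  · rintro ⟨g, rfl⟩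
    obtain ⟨X, ⟨hX, hgX⟩, -⟩ := A.existsUnique_mem g
    rwa [← orbit_eq_setOf, h X hX g hgX]

lemma IsASet.subBlocks {Bl : Set (Set G)} {U : AddSubgroup G} {Y : Set G}
    (hY : IsASet Bl Y) (hYU : Y ⊆ U) : IsASet (subBlocks Bl U) (Subtype.val ⁻¹' Y) := by
  obtain ⟨C, hC, rfl⟩ := hY
  refine ⟨(Subtype.val ⁻¹' ·) '' C, ?_, ?_⟩
  · rintro _ ⟨X, hXC, rfl⟩
    exact ⟨X, hC hXC, (Set.subset_sUnion_of_mem hXC).trans hYU, rfl⟩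
  · ext u
    simp

lemma IsASet.quotBlocks {G : Type*} [AddCommGroup G] {Bl : Set (Set G)} {L : AddSubgroup G}
    {Y : Set G} (hY : IsASet Bl Y) : IsASet (quotBlocks Bl L) ((↑) '' Y) := by
  obtain ⟨C, hC, rfl⟩ := hY
  refine ⟨((↑) '' ·) '' C, ?_, ?_⟩
  · rintro _ ⟨X, hXC, rfl⟩
    exact ⟨X, hC hXC, rfl⟩
  · exact Set.image_sUnion

lemma preimage_image_mk_eq_of_subset_radSet {L : AddSubgroup G} {X : Set G}
    (hL : (L : Set G) ⊆ radSet X) : (↑) ⁻¹' (((↑) : G → G ⧸ L) '' X) = X := by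
  refine subset_antisymm ?_ (Set.subset_preimage_image _ _)
  rintro y ⟨x, hx, hxy⟩
  rw [← (hL (QuotientAddGroup.eq.mp hxy)).2]
  exact ⟨x, hx, add_neg_cancel_left x y⟩

end Blocks

section SectionAut

variable {G : Type*} [AddCommGroup G] {U L : AddSubgroup G}

def AgreeOnSection (U L : AddSubgroup G) (φ1 : AddAut U) (φ2 : AddAut (G ⧸ L)) : Prop :=
  ∀ u : U, (((φ1 u : U) : G) : G ⧸ L) = φ2 (u : G)

lemma QuotientAddGroup.mk_addSubgroupOf_eq_iff {u v : U} :
    (u : U ⧸ L.addSubgroupOf U) = v ↔ ((u : G) : G ⧸ L) = (v : G) := by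
  rw [QuotientAddGroup.eq, QuotientAddGroup.eq, AddSubgroup.mem_addSubgroupOf]
  rfl

lemma exists_secAut_of_sub {φ1 : AddAut U}
    (h : (L.addSubgroupOf U).map (φ1 : U →+ U) = L.addSubgroupOf U) :
    ∃ ψ : AddAut (U ⧸ L.addSubgroupOf U), ∀ u : U, ψ u = φ1 u :=
  ⟨QuotientAddGroup.congr _ _ φ1 h, fun _ => rfl⟩

lemma exists_secAut_of_quot {φ2 : AddAut (G ⧸ L)}
    (h : (U.map (QuotientAddGroup.mk' L)).map (φ2 : G ⧸ L →+ G ⧸ L) =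
      U.map (QuotientAddGroup.mk' L)) :
    ∃ ψ : AddAut (U ⧸ L.addSubgroupOf U), ∀ u v : U,
      φ2 (u : G) = (v : G) → ψ u = v := by
  let e : U ⧸ L.addSubgroupOf U →+ G ⧸ L := QuotientAddGroup.map _ L U.subtype le_rfl
  have he : Function.Injective e := by
    rw [injective_iff_map_eq_zero]
    rintro ⟨u⟩ hu
    exact (QuotientAddGroup.eq_zero_iff _).mpr
      (AddSubgroup.mem_addSubgroupOf.mpr ((QuotientAddGroup.eq_zero_iff _).mp hu))
  have hrange : e.range = U.map (QuotientAddGroup.mk' L) := by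
    ext y
    constructor
    · rintro ⟨⟨u⟩, rfl⟩
      exact ⟨u, u.2, rfl⟩
    · rintro ⟨x, hx, rfl⟩
      exact ⟨(⟨x, hx⟩ : U), rfl⟩
  let ι := (AddMonoidHom.ofInjective he).trans (AddEquiv.addSubgroupCongr hrange)
  refine ⟨(ι.trans ((φ2.addSubgroupMap _).trans (AddEquiv.addSubgroupCongr h))).trans ι.symm,
    fun u v huv => ?_⟩
  rw [AddEquiv.trans_apply, AddEquiv.symm_apply_eq]
  exact Subtype.ext huv

lemma AgreeOnSection.of_secAut {φ1 : AddAut U} {φ2 : AddAut (G ⧸ L)}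
    (hφ2 : ∀ u : U, ∃ v : U, φ2 (u : G) = (v : G)) (ψ : AddAut (U ⧸ L.addSubgroupOf U))
    (hψ1 : ∀ u : U, ψ u = φ1 u) (hψ2 : ∀ u v : U, φ2 (u : G) = (v : G) → ψ u = v) :
    AgreeOnSection U L φ1 φ2 := by
  intro u
  obtain ⟨v, hv⟩ := hφ2 u
  rw [hv, ← QuotientAddGroup.mk_addSubgroupOf_eq_iff, ← hψ1, hψ2 u v hv]

lemma exists_eq_mk_of_map_eq {φ2 : AddAut (G ⧸ L)}
    (h : (U.map (QuotientAddGroup.mk' L)).map (φ2 : G ⧸ L →+ G ⧸ L) =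
      U.map (QuotientAddGroup.mk' L)) (u : U) : ∃ v : U, φ2 (u : G) = (v : G) := by
  have hu : φ2 (u : G) ∈ (U.map (QuotientAddGroup.mk' L)).map (φ2 : G ⧸ L →+ G ⧸ L) :=
    ⟨_, ⟨u, u.2, rfl⟩, rfl⟩
  obtain ⟨v, hv, hφv⟩ := h ▸ hu
  exact ⟨⟨v, hv⟩, hφv.symm⟩

end SectionAut

section ElementaryAbelian

variable {G : Type*} [AddCommGroup G]

lemma exists_retraction_zmod (p : ℕ) [Fact p.Prime] [Module (ZMod p) G] (U : AddSubgroup G) :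
    ∃ r : G →+ U, ∀ u : U, r u = u := by
  obtain ⟨r, hr⟩ := LinearMap.exists_leftInverse_of_injective
    (U.toZModSubmodule p).subtype (U.toZModSubmodule p).ker_subtype
  exact ⟨r.toAddMonoidHom, fun u => LinearMap.congr_fun hr u⟩

lemma exists_section_mk_zmod (p : ℕ) [Fact p.Prime] [Module (ZMod p) G] (L : AddSubgroup G) :
    ∃ s : G ⧸ L →+ G, ∀ y, (s y : G ⧸ L) = y := by
  obtain ⟨s, hs⟩ := LinearMap.exists_rightInverse_of_surjective
    (L.toZModSubmodule p).mkQ (Submodule.range_mkQ _)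
  exact ⟨s.toAddMonoidHom, fun y => LinearMap.congr_fun hs y⟩

lemma exists_transvection_zmod (p : ℕ) [Fact p.Prime] [Module (ZMod p) G] {U : AddSubgroup G}
    {x l : G} (hx : x ∉ U) (hl : l ∈ U) :
    ∃ τ : AddAut G, τ x = x + l ∧ (∀ u ∈ U, τ u = u) ∧
      ∀ g, τ g - g ∈ AddSubgroup.zmultiples l := by
  obtain ⟨f, hfx, hfU⟩ := Submodule.exists_dual_map_eq_bot_of_notMem
    (p := U.toZModSubmodule p) hx inferInstance
  have hfU' : ∀ u ∈ U, f u = 0 := fun u hu =>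
    (Submodule.mem_bot _).mp (hfU ▸ Submodule.mem_map_of_mem (p := U.toZModSubmodule p) hu)
  set f' := (f x)⁻¹ • f
  have hf'l : f' l = 0 := by simp [f', hfU' l hl]
  refine ⟨(LinearEquiv.transvection hf'l).toAddEquiv, ?_, fun u hu => ?_, fun g => ?_⟩
  · simp [LinearMap.transvection.apply, f', hfx]
  · simp [LinearMap.transvection.apply, f', hfU' u hu]
  · change g + f' g • l - g ∈ _
    rw [add_sub_cancel_left]
    exact ZMod.smul_mem (n := p) (AddSubgroup.mem_zmultiples l) _

lemma exists_addAut_extend_zmod (p : ℕ) [Fact p.Prime] [Module (ZMod p) G]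
    {U L : AddSubgroup G} (hLU : L ≤ U) {φ1 : AddAut U}
    {φ2 : AddAut (G ⧸ L)} (h : AgreeOnSection U L φ1 φ2) :
    ∃ φ : AddAut G, (∀ u : U, φ u = φ1 u) ∧ ∀ g, (φ g : G ⧸ L) = φ2 g := by
  obtain ⟨r, hr⟩ := exists_retraction_zmod p U
  obtain ⟨s, hs⟩ := exists_section_mk_zmod p L
  -- on `g = r g + (g - r g)`, act by `φ1` on the first summand and by a lift of `φ2`
  -- on the second
  let θ : G →+ G := U.subtype.comp ((φ1 : U →+ U).comp r) +
    s.comp ((φ2 : G ⧸ L →+ G ⧸ L).comp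
      ((QuotientAddGroup.mk' L).comp (AddMonoidHom.id G - U.subtype.comp r)))
  have hθ : ∀ g, θ g = φ1 (r g) + s (φ2 (g - r g : G)) := fun _ => rfl
  have hθU : ∀ u : U, θ u = φ1 u := fun u => by simp [hθ, hr]
  have hθL : ∀ g, (θ g : G ⧸ L) = φ2 g := fun g => by
    rw [hθ, QuotientAddGroup.mk_add, hs, h, ← map_add, ← QuotientAddGroup.mk_add,
      add_sub_cancel]
  have hinj : Function.Injective θ := by
    refine (injective_iff_map_eq_zero θ).mpr fun g hg => ?_
    have hgL : g ∈ L := by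
      rw [← QuotientAddGroup.eq_zero_iff, ← map_eq_zero_iff φ2 φ2.injective, ← hθL, hg,
        QuotientAddGroup.mk_zero]
    have h0 : φ1 ⟨g, hLU hgL⟩ = 0 := Subtype.ext ((hθU ⟨g, hLU hgL⟩).symm.trans hg)
    simpa using congrArg Subtype.val ((map_eq_zero_iff φ1 φ1.injective).mp h0)
  have hsurj : Function.Surjective θ := by
    intro y
    obtain ⟨g, hg⟩ := (φ2.surjective.comp QuotientAddGroup.mk_surjective) (y : G ⧸ L)
    have hl : -y + θ g ∈ U := hLU (QuotientAddGroup.eq.mp ((hθL g).trans hg).symm)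
    refine ⟨g - φ1.symm ⟨_, hl⟩, ?_⟩
    rw [map_sub, hθU, AddEquiv.apply_symm_apply]
    simp
  exact ⟨AddEquiv.ofBijective θ ⟨hinj, hsurj⟩, hθU, hθL⟩

end ElementaryAbelian

section Lifts

variable {G : Type*} [AddCommGroup G] {U L : AddSubgroup G}

def autExtending (U : AddSubgroup G) (K : AddSubgroup (AddAut U)) : AddSubgroup (AddAut G) where
  carrier := {φ | ∃ φ1 ∈ K, ∀ u : U, φ u = φ1 u}
  zero_mem' := ⟨0, zero_mem K, fun _ => rfl⟩
  add_mem' := by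
    rintro a b ⟨a1, ha1, ha⟩ ⟨b1, hb1, hb⟩
    exact ⟨a1 + b1, add_mem ha1 hb1, fun u => by simp [ha, hb]⟩
  neg_mem' := by
    rintro a ⟨a1, ha1, ha⟩
    refine ⟨-a1, neg_mem ha1, fun u => a.injective ?_⟩
    rw [AddAut.apply_neg_self, ha, AddAut.apply_neg_self]

def autInducing (L : AddSubgroup G) (K : AddSubgroup (AddAut (G ⧸ L))) :
    AddSubgroup (AddAut G) where
  carrier := {φ | ∃ φ2 ∈ K, ∀ g : G, (φ g : G ⧸ L) = φ2 g}
  zero_mem' := ⟨0, zero_mem K, fun _ => rfl⟩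
  add_mem' := by
    rintro a b ⟨a2, ha2, ha⟩ ⟨b2, hb2, hb⟩
    exact ⟨a2 + b2, add_mem ha2 hb2, fun g => by simp [ha, hb]⟩
  neg_mem' := by
    rintro a ⟨a2, ha2, ha⟩
    refine ⟨-a2, neg_mem ha2, fun g => a2.injective ?_⟩
    rw [← ha, AddAut.apply_neg_self, AddAut.apply_neg_self]

lemma apply_notMem_of_mem_autExtending {K : AddSubgroup (AddAut U)} {φ : AddAut G}
    (hφ : φ ∈ autExtending U K) {x : G} (hx : x ∉ U) : φ x ∉ U := by
  intro hφx
  obtain ⟨ψ, -, hψ⟩ := neg_mem hφ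
  have hψx := hψ ⟨φ x, hφx⟩
  rw [AddAut.neg_apply_self] at hψx
  exact hx (hψx ▸ (ψ _).2)

variable {K1 : AddSubgroup (AddAut U)} {K2 : AddSubgroup (AddAut (G ⧸ L))}

lemma exists_mem_autInducing_extending (p : ℕ) [Fact p.Prime] [Module (ZMod p) G]
    (hLU : L ≤ U) (hS : secAutOfSub U L (K1 : Set (AddAut U)) ⊆ secAutOfQuot U L K2)
    (hK1 : ∀ φ1 ∈ K1, (L.addSubgroupOf U).map (φ1 : U →+ U) = L.addSubgroupOf U)
    (hK2 : ∀ φ2 ∈ K2, (U.map (QuotientAddGroup.mk' L)).map (φ2 : G ⧸ L →+ G ⧸ L) =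
      U.map (QuotientAddGroup.mk' L))
    {φ1 : AddAut U} (hφ1 : φ1 ∈ K1) :
    ∃ φ ∈ autInducing L K2, ∀ u : U, φ u = φ1 u := by
  obtain ⟨ψ, hψ⟩ := exists_secAut_of_sub (hK1 φ1 hφ1)
  obtain ⟨φ2, hφ2, hψ2⟩ := hS ⟨φ1, hφ1, hψ⟩
  obtain ⟨φ, hφU, hφL⟩ := exists_addAut_extend_zmod p hLU
    (.of_secAut (exists_eq_mk_of_map_eq (hK2 φ2 hφ2)) ψ hψ hψ2)
  exact ⟨φ, ⟨φ2, hφ2, hφL⟩, hφU⟩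

lemma exists_mem_autExtending_inducing (p : ℕ) [Fact p.Prime] [Module (ZMod p) G]
    (hLU : L ≤ U) (hS : secAutOfQuot U L (K2 : Set (AddAut (G ⧸ L))) ⊆ secAutOfSub U L K1)
    (hK2 : ∀ φ2 ∈ K2, (U.map (QuotientAddGroup.mk' L)).map (φ2 : G ⧸ L →+ G ⧸ L) =
      U.map (QuotientAddGroup.mk' L))
    {φ2 : AddAut (G ⧸ L)} (hφ2 : φ2 ∈ K2) :
    ∃ φ ∈ autExtending U K1, ∀ g : G, (φ g : G ⧸ L) = φ2 g := by
  obtain ⟨ψ, hψ⟩ := exists_secAut_of_quot (hK2 φ2 hφ2)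
  obtain ⟨φ1, hφ1, hψ1⟩ := hS ⟨φ2, hφ2, hψ⟩
  obtain ⟨φ, hφU, hφL⟩ := exists_addAut_extend_zmod p hLU
    (.of_secAut (exists_eq_mk_of_map_eq (hK2 φ2 hφ2)) ψ hψ1 hψ)
  exact ⟨φ, ⟨φ1, hφ1, hφU⟩, hφL⟩

lemma orbit_inf_coe_eq_image_orbit
    (hlift : ∀ φ1 ∈ K1, ∃ φ ∈ autInducing L K2, ∀ u : U, φ u = φ1 u) (u : U) :
    AddAction.orbit ↥(autExtending U K1 ⊓ autInducing L K2) (u : G) =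
      Subtype.val '' AddAction.orbit K1 u := by
  ext y
  simp only [orbit_eq_setOf, Set.mem_image, Set.mem_ofPred_eq]
  constructor
  · rintro ⟨φ, ⟨⟨φ1, hφ1, hφ⟩, -⟩, rfl⟩
    exact ⟨φ1 u, ⟨φ1, hφ1, rfl⟩, (hφ u).symm⟩
  · rintro ⟨_, ⟨φ1, hφ1, rfl⟩, rfl⟩
    obtain ⟨φ, hφ, hφU⟩ := hlift φ1 hφ1
    exact ⟨φ, ⟨⟨φ1, hφ1, hφU⟩, hφ⟩, hφU u⟩

lemma exists_mem_inf_apply_eq_add (p : ℕ) [Fact p.Prime] [Module (ZMod p) G] (hLU : L ≤ U)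
    {x l : G} (hx : x ∉ U) (hl : l ∈ L) :
    ∃ τ ∈ autExtending U K1 ⊓ autInducing L K2, τ x = x + l := by
  obtain ⟨τ, hτx, hτU, hτL⟩ := exists_transvection_zmod p hx (hLU hl)
  refine ⟨τ, ⟨⟨0, zero_mem K1, fun u => hτU u u.2⟩, ⟨0, zero_mem K2, fun g => ?_⟩⟩,
    hτx⟩
  exact QuotientAddGroup.eq_iff_sub_mem.mpr (AddSubgroup.zmultiples_le.mpr hl (hτL g))

lemma orbit_inf_eq_preimage_orbit (p : ℕ) [Fact p.Prime] [Module (ZMod p) G] (hLU : L ≤ U)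
    (hlift : ∀ φ2 ∈ K2, ∃ φ ∈ autExtending U K1, ∀ g : G, (φ g : G ⧸ L) = φ2 g)
    {x : G} (hx : x ∉ U) :
    AddAction.orbit ↥(autExtending U K1 ⊓ autInducing L K2) x =
      (↑) ⁻¹' AddAction.orbit K2 (x : G ⧸ L) := by
  ext y
  simp only [orbit_eq_setOf, Set.mem_preimage, Set.mem_ofPred_eq]
  constructor
  · rintro ⟨φ, ⟨-, ⟨φ2, hφ2, hφ⟩⟩, rfl⟩
    exact ⟨φ2, hφ2, (hφ x).symm⟩
  · rintro ⟨φ2, hφ2, hy⟩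
    obtain ⟨φ, hφU, hφL⟩ := hlift φ2 hφ2
    have hl : -φ x + y ∈ L := QuotientAddGroup.eq.mp ((hφL x).trans hy)
    obtain ⟨τ, hτ, hτx⟩ := exists_mem_inf_apply_eq_add p hLU
      (apply_notMem_of_mem_autExtending hφU hx) hl
    refine ⟨τ + φ, add_mem hτ ⟨hφU, φ2, hφ2, hφL⟩, ?_⟩
    rw [AddAut.add_apply, hτx, add_neg_cancel_left]

end Lifts

theorem statement6_general (p : ℕ) (hp : p.Prime) (G : Type*) [AddCommGroup G]
    (hGp : ∀ g : G, p • g = 0)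
    (A : SRing G) (U L : AddSubgroup G)
    (hwr : IsNontrivialWreath A.blocks U L)
    (K1 : AddSubgroup (AddAut U)) (hK1 : subBlocks A.blocks U = autOrbits K1)
    (K2 : AddSubgroup (AddAut (G ⧸ L))) (hK2 : quotBlocks A.blocks L = autOrbits K2)
    (hS : secAutOfSub U L (K1 : Set (AddAut U)) =
      secAutOfQuot U L (K2 : Set (AddAut (G ⧸ L)))) :
    IsCyclotomic A.blocks := by
  obtain ⟨⟨hUA, hLA, hLU, -, hrad⟩, -, -⟩ := hwr
  have : Fact p.Prime := ⟨hp⟩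
  let _ := AddCommGroup.zmodModule hGp
  have hL : ∀ φ1 ∈ K1, (L.addSubgroupOf U).map (φ1 : U →+ U) = L.addSubgroupOf U := fun _ =>
    AddSubgroup.map_eq_self_of_forall_apply_mem fun _ hφ _ hx =>
      (hK1 ▸ hLA.subBlocks hLU).apply_mem hφ hx
  have hU : ∀ φ2 ∈ K2, (U.map (QuotientAddGroup.mk' L)).map (φ2 : G ⧸ L →+ G ⧸ L) =
      U.map (QuotientAddGroup.mk' L) := fun _ =>
    AddSubgroup.map_eq_self_of_forall_apply_mem fun _ hφ _ hy =>
      (hK2 ▸ hUA.quotBlocks).apply_mem hφ hy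
  have hlift1 := fun φ1 (hφ1 : φ1 ∈ K1) =>
    exists_mem_autInducing_extending p hLU hS.subset hL hU hφ1
  have hlift2 := fun φ2 (hφ2 : φ2 ∈ K2) =>
    exists_mem_autExtending_inducing p hLU hS.symm.subset hU hφ2
  refine ⟨_, A.blocks_eq_autOrbits (autExtending U K1 ⊓ autInducing L K2) fun X hX x hx => ?_⟩
  by_cases hXU : X ⊆ U
  · have hxU := hXU hx
    have hXK1 : Subtype.val ⁻¹' X ∈ autOrbits K1 := hK1 ▸ ⟨X, hX, hXU, rfl⟩
    rw [show x = ((⟨x, hxU⟩ : U) : G) from rfl, orbit_inf_coe_eq_image_orbit hlift1,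
      ← eq_orbit_of_mem_autOrbits hXK1 (x := ⟨x, hxU⟩) hx]
    exact Set.image_preimage_eq_of_subset (by rwa [Subtype.range_coe_subtype])
  · have hxU : x ∉ U := fun h => hXU (A.subset_of_isASet hUA hX hx h)
    have hXK2 : ((↑) : G → G ⧸ L) '' X ∈ autOrbits K2 := hK2 ▸ ⟨X, hX, rfl⟩
    rw [orbit_inf_eq_preimage_orbit p hLU hlift2 hxU,
      ← eq_orbit_of_mem_autOrbits hXK2 (Set.mem_image_of_mem _ hx),
      preimage_image_mk_eq_of_subset_radSet (hrad X hX hXU)]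

/-- Let `G` be an elementary abelian `p`-group, `A` an S-ring over
`G`, `S = U/L` an `A`-section with `A` the nontrivial `S`-wreath product,
`A_U = cyc(K1,U)` and `A_{G/L} = cyc(K2,G/L)`. If `K1^S = K2^S` then `A` is
cyclotomic. -/
theorem statement6 (p : ℕ) (hp : p.Prime) (G : Type*) [AddCommGroup G] [Finite G]
    (hGp : ∀ g : G, p • g = 0)
    (A : SRing G) (U L : AddSubgroup G)
    (hwr : IsNontrivialWreath A.blocks U L)
    (K1 : AddSubgroup (AddAut U)) (hK1 : subBlocks A.blocks U = autOrbits K1)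
    (K2 : AddSubgroup (AddAut (G ⧸ L))) (hK2 : quotBlocks A.blocks L = autOrbits K2)
    (hS : secAutOfSub U L (K1 : Set (AddAut U)) =
      secAutOfQuot U L (K2 : Set (AddAut (G ⧸ L)))) :
    IsCyclotomic A.blocks :=
  statement6_general p hp G hGp A U L hwr K1 hK1 K2 hK2 hS
end

section
/- Let A be an S-ring over a finite abelian group G = G1 × G2 such that G1 and G2 are A-subgroups. If A_{G1} = ℤG1 or A_{G2} = ℤG2 (i.e., all basic sets of A contained in G1, respectively in G2, are singletons), then A = A_{G1} ⊗ A_{G2}, that is, every basic set of A equals Y·Z for some basic sets Y ∈ S(A_{G1}) and Z ∈ S(A_{G2}). -/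
open Pointwise

/-! If every basic set inside `G1` is a singleton `{g}`, then translation by `g` permutes the
basic sets: the structure constant `c^Z_{{g},X}` is the indicator function of `{g} + X`, and it
is constant on the basic set `Z`. Writing a point of a basic set `X` as `g1 + g2` with
`gi ∈ Gi`, the translate `{-g1} + X` is a basic set containing `g2`, hence contained in the
`A`-subgroup `G2`, and `X = {g1} + ({-g1} + X)`. -/

namespace Set

variable {G : Type*} [AddGroup G]

theorem mem_singleton_add_iff {g x : G} {X : Set G} : x ∈ ({g} : Set G) + X ↔ -g + x ∈ X := by
  rw [singleton_add]
  constructor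
  · rintro ⟨y, hy, rfl⟩
    simpa using hy
  · exact fun h => ⟨-g + x, h, add_neg_cancel_left g x⟩

open scoped Classical in
theorem ncard_singleton_add_fiber (g z : G) (X : Set G) :
    {a : G × G | a.1 ∈ ({g} : Set G) ∧ a.2 ∈ X ∧ a.1 + a.2 = z}.ncard =
      if -g + z ∈ X then 1 else 0 := by
  have fiber : {a : G × G | a.1 ∈ ({g} : Set G) ∧ a.2 ∈ X ∧ a.1 + a.2 = z} =
      (fun b => (g, b)) '' ({-g + z} ∩ X) := by
    ext ⟨a, b⟩
    simp only [mem_ofPred_eq, mem_singleton_iff, mem_image, mem_inter_iff, Prod.mk.injEq]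
    constructor
    · rintro ⟨rfl, hb, rfl⟩
      exact ⟨b, ⟨by simp, hb⟩, rfl, rfl⟩
    · rintro ⟨b, ⟨rfl, hb⟩, rfl, rfl⟩
      exact ⟨rfl, hb, add_neg_cancel_left _ _⟩
  rw [fiber, ncard_image_of_injective _ (Prod.mk_right_injective g)]
  split_ifs with h
  · rw [singleton_inter_of_mem h, ncard_singleton]
  · rw [singleton_inter_of_notMem h, ncard_empty]

end Set

namespace SRing

variable {G : Type*} [AddGroup G] (A : SRing G)

theorem eq_of_mem_of_mem {X Y : Set G} (hX : X ∈ A.blocks) (hY : Y ∈ A.blocks) {x : G}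
    (hxX : x ∈ X) (hxY : x ∈ Y) : X = Y :=
  (A.existsUnique_mem x).unique ⟨hX, hxX⟩ ⟨hY, hxY⟩

theorem subset_of_isASet_s19 {T X : Set G} (hT : IsASet A.blocks T) (hX : X ∈ A.blocks) {x : G}
    (hxX : x ∈ X) (hxT : x ∈ T) : X ⊆ T := by
  obtain ⟨C, hC, rfl⟩ := hT
  obtain ⟨Y, hY, hxY⟩ := hxT
  rw [A.eq_of_mem_of_mem hX (hC hY) hxX hxY]
  exact Set.subset_sUnion_of_mem hY

theorem subset_singleton_add {g : G} (hg : {g} ∈ A.blocks) {X Z : Set G} (hX : X ∈ A.blocks)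
    (hZ : Z ∈ A.blocks) {z : G} (hzZ : z ∈ Z) (hz : z ∈ ({g} : Set G) + X) :
    Z ⊆ {g} + X := by
  intro z' hz'
  have hcount := A.count_const _ hg X hX Z hZ z hzZ z' hz'
  rw [Set.ncard_singleton_add_fiber, Set.ncard_singleton_add_fiber,
    if_pos (Set.mem_singleton_add_iff.mp hz)] at hcount
  -- the branch `-g + z' ∉ X` reads `1 = 0`
  split_ifs at hcount with h
  exact Set.mem_singleton_add_iff.mpr h

theorem singleton_add_mem_blocks {g : G} (hg : {g} ∈ A.blocks) {X : Set G}
    (hX : X ∈ A.blocks) : {g} + X ∈ A.blocks := by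
  obtain ⟨x, hx⟩ := A.nonempty_mem X hX
  obtain ⟨Z, ⟨hZ, hgxZ⟩, -⟩ := A.existsUnique_mem (g + x)
  have hng : {-g} ∈ A.blocks := by simpa using A.neg_mem _ hg
  have hgx : g + x ∈ ({g} : Set G) + X := Set.mem_singleton_add_iff.mpr (by simpa using hx)
  have hXZ : X ⊆ {-g} + Z := A.subset_singleton_add hng hZ hX hx
    (Set.mem_singleton_add_iff.mpr (by simpa using hgxZ))
  suffices Z = {g} + X from this ▸ hZ
  refine (A.subset_singleton_add hg hX hZ hgxZ hgx).antisymm fun y hy => ?_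
  simpa using Set.mem_singleton_add_iff.mp (hXZ (Set.mem_singleton_add_iff.mp hy))

theorem singleton_mem_blocks {H : AddSubgroup G} (hH : IsASubgroup A.blocks H)
    (hsing : ∀ X ∈ A.blocks, X ⊆ (H : Set G) → ∃ x : G, X = {x}) {g : G} (hg : g ∈ H) :
    {g} ∈ A.blocks := by
  obtain ⟨X, ⟨hX, hgX⟩, -⟩ := A.existsUnique_mem g
  obtain ⟨x, rfl⟩ := hsing X hX (A.subset_of_isASet_s19 hH hX hgX hg)
  rwa [Set.mem_singleton_iff.mp hgX]

end SRing

theorem SRing.exists_eq_singleton_add {G : Type*} [AddCommGroup G] (A : SRing G)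
    {H K : AddSubgroup G} (hsup : H ⊔ K = ⊤) (hK : IsASubgroup A.blocks K)
    (hH : ∀ g ∈ H, {g} ∈ A.blocks) {X : Set G} (hX : X ∈ A.blocks) :
    ∃ g ∈ H, ∃ Z ∈ A.blocks, Z ⊆ K ∧ X = {g} + Z := by
  obtain ⟨x, hx⟩ := A.nonempty_mem X hX
  obtain ⟨g, hg, k, hk, rfl⟩ := AddSubgroup.mem_sup.mp (hsup ▸ AddSubgroup.mem_top x)
  have hZ : {-g} + X ∈ A.blocks := A.singleton_add_mem_blocks (hH _ (H.neg_mem hg)) hX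
  have hkZ : k ∈ ({-g} : Set G) + X := Set.mem_singleton_add_iff.mpr (by simpa using hx)
  refine ⟨g, hg, _, hZ, A.subset_of_isASet_s19 hK hZ hkZ hk, ?_⟩
  rw [← add_assoc, Set.singleton_add_singleton, add_neg_cancel, Set.singleton_zero, zero_add]

theorem statement19_general (G : Type*) [AddCommGroup G]
    (G1 G2 : AddSubgroup G) (hsup : G1 ⊔ G2 = ⊤)
    (A : SRing G) (h1 : IsASubgroup A.blocks G1) (h2 : IsASubgroup A.blocks G2)
    (hZ : (∀ X ∈ A.blocks, X ⊆ (G1 : Set G) → ∃ x : G, X = {x}) ∨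
          (∀ X ∈ A.blocks, X ⊆ (G2 : Set G) → ∃ x : G, X = {x})) :
    ∀ X ∈ A.blocks, ∃ Y ∈ A.blocks, Y ⊆ (G1 : Set G) ∧
      ∃ Z ∈ A.blocks, Z ⊆ (G2 : Set G) ∧ X = Y + Z := by
  intro X hX
  rcases hZ with hsing | hsing
  · obtain ⟨g, hg, Z, hZ, hZG2, rfl⟩ :=
      A.exists_eq_singleton_add hsup h2 (fun _ => A.singleton_mem_blocks h1 hsing) hX
    exact ⟨{g}, A.singleton_mem_blocks h1 hsing hg, Set.singleton_subset_iff.mpr hg, Z, hZ,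
      hZG2, rfl⟩
  · obtain ⟨g, hg, Y, hY, hYG1, rfl⟩ :=
      A.exists_eq_singleton_add (sup_comm G1 G2 ▸ hsup) h1
        (fun _ => A.singleton_mem_blocks h2 hsing) hX
    exact ⟨Y, hY, hYG1, {g}, A.singleton_mem_blocks h2 hsing hg,
      Set.singleton_subset_iff.mpr hg, add_comm _ _⟩

/-- Let `A` be an S-ring over an abelian group `G = G1 × G2` with
`G1`, `G2` `A`-subgroups. If `A_{G1}` or `A_{G2}` is the group ring, then
`A = A_{G1} ⊗ A_{G2}`: every basic set of `A` is of the form `Y + Z` with `Y`, `Z`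
basic sets contained in `G1`, `G2` respectively. -/
theorem statement19 (G : Type*) [AddCommGroup G] [Finite G]
    (G1 G2 : AddSubgroup G) (hinf : G1 ⊓ G2 = ⊥) (hsup : G1 ⊔ G2 = ⊤)
    (A : SRing G) (h1 : IsASubgroup A.blocks G1) (h2 : IsASubgroup A.blocks G2)
    (hZ : (∀ X ∈ A.blocks, X ⊆ (G1 : Set G) → ∃ x : G, X = {x}) ∨
          (∀ X ∈ A.blocks, X ⊆ (G2 : Set G) → ∃ x : G, X = {x})) :
    ∀ X ∈ A.blocks, ∃ Y ∈ A.blocks, Y ⊆ (G1 : Set G) ∧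
      ∃ Z ∈ A.blocks, Z ⊆ (G2 : Set G) ∧ X = Y + Z :=
  statement19_general G G1 G2 hsup A h1 h2 hZ
end
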